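/- arXiv:0809.2443 — 6 statements merged into one kernel-verified Lean document; each statement's English description precedes it below -/
import Mathlib

section
/- Let v be a vertex of degree 3 in a graph G, with neighbors a, b, c, and suppose u is another vertex with the same neighborhood {a, b, c} and u is not adjacent to v. Then in any Hamiltonian cycle of G, the two vertices u and v together use all three vertices a, b, c as their cycle-neighbors, and the cycle restricted to {u, v, a, b, c} forms a path x–v–y–u–z where {x, y, z} = {a, b, c}. -/
open SimpleGraph Walk

section Aux

variable {V : Type*} {G : SimpleGraph V}

/-- In a walk with nodup support ending at `t`, any edge incident to `t`
is the last edge. -/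
lemma aux_lemA {x t r : V} (p : G.Walk x t) (hnd : p.support.Nodup)
    (hr : s(t, r) ∈ p.edges) : p.edges.getLast? = some s(r, t) := by
  induction p with
  | nil => simp at hr
  | @cons x w t h q ih =>
    rw [Walk.support_cons, List.nodup_cons] at hnd
    rw [Walk.edges_cons, List.mem_cons] at hr
    rcases hr with hr | hr
    · rw [Sym2.eq_iff] at hr
      rcases hr with ⟨rfl, rfl⟩ | ⟨rfl, rfl⟩
      · exact absurd (q.end_mem_support) hnd.1
      · have hqnil : q = Walk.nil := Walk.isPath_iff_eq_nil.mp (Walk.IsPath.mk' hnd.2)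
        subst hqnil
        simp
    · have hne : q.edges ≠ [] := List.ne_nil_of_mem hr
      rw [Walk.edges_cons]
      rw [← ih hnd.2 hr]
      cases hq : q.edges with
      | nil => exact absurd hq hne
      | cons e es => simp

/-- A walk with distinct endpoints has an edge incident to its end. -/
lemma aux_lemE {x t : V} (p : G.Walk x t) (hne : x ≠ t) : ∃ r, s(t, r) ∈ p.edges := by
  induction p with
  | nil => exact absurd rfl hne
  | @cons x w t h q ih =>
    by_cases hwt : w = t
    · subst hwt
      exact ⟨x, by rw [Walk.edges_cons, List.mem_cons]; left; rw [Sym2.eq_swap]⟩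
    · obtain ⟨r, hr⟩ := ih hwt
      exact ⟨r, by rw [Walk.edges_cons]; exact List.mem_cons_of_mem _ hr⟩

/-- In a cycle based at `t`, the vertex `t` has exactly two neighbors along the cycle. -/
lemma aux_lemB {t : V} {q : G.Walk t t} (hq : q.IsCycle) :
    ∃ x y, x ≠ y ∧ s(t, x) ∈ q.edges ∧ s(t, y) ∈ q.edges ∧
      ∀ r, s(t, r) ∈ q.edges → r = x ∨ r = y := by
  cases q with
  | nil => exact absurd hq Walk.IsCycle.not_of_nil
  | @cons _ w _ h q' =>
    have hnd : q'.support.Nodup := by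
      have := hq.support_nodup
      rwa [Walk.support_cons, List.tail_cons] at this
    have hednd : (s(t, w) :: q'.edges).Nodup := by
      have := hq.isTrail.edges_nodup
      rwa [Walk.edges_cons] at this
    have htw_notin : s(t, w) ∉ q'.edges := (List.nodup_cons.mp hednd).1
    obtain ⟨y, hy⟩ := aux_lemE q' h.ne'
    have hxy : w ≠ y := by
      rintro rfl
      exact htw_notin hy
    refine ⟨w, y, hxy, by simp, ?_, ?_⟩
    · rw [Walk.edges_cons]
      exact List.mem_cons_of_mem _ hy
    · intro r hr
      rw [Walk.edges_cons, List.mem_cons] at hr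
      rcases hr with hr | hr
      · rw [Sym2.eq_iff] at hr
        rcases hr with ⟨-, rfl⟩ | ⟨rfl, rfl⟩
        · exact Or.inl rfl
        · exact absurd rfl h.ne
      · right
        have h1 := aux_lemA q' hnd hr
        have h2 := aux_lemA q' hnd hy
        rw [h1] at h2
        have h3 : s(r, t) = s(y, t) := by injection h2
        rw [Sym2.eq_iff] at h3
        rcases h3 with ⟨rfl, -⟩ | ⟨rfl, rfl⟩
        · rfl
        · exact absurd (q'.adj_of_mem_edges hy) G.irrefl

/-- Each vertex on a Hamiltonian cycle has exactly two neighbors along the cycle. -/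
lemma aux_lemC [DecidableEq V] {w : V} {p : G.Walk w w} (hp : p.IsHamiltonianCycle) (t : V) :
    ∃ x y, x ≠ y ∧ s(t, x) ∈ p.edges ∧ s(t, y) ∈ p.edges ∧
      ∀ r, s(t, r) ∈ p.edges → r = x ∨ r = y := by
  have ht : t ∈ p.support := hp.mem_support t
  obtain ⟨x, y, hxy, hx, hy, hu⟩ := aux_lemB (hp.isCycle.rotate ht)
  have hpe : ∀ e : Sym2 V, e ∈ (p.rotate t ht).edges ↔ e ∈ p.edges :=
    fun e => (p.rotate_edges t ht).mem_iff
  exact ⟨x, y, hxy, (hpe _).mp hx, (hpe _).mp hy,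
    fun r hr => hu r ((hpe _).mpr hr)⟩

/-- Walking along edges of a list `E`, starting in a set closed under `E`-adjacency,
we stay in the set. -/
lemma aux_closed {S : Set V} {E : List (Sym2 V)}
    (hS : ∀ s ∈ S, ∀ r, s(s, r) ∈ E → r ∈ S) :
    ∀ {x y : V} (p : G.Walk x y), (∀ e ∈ p.edges, e ∈ E) → x ∈ S → y ∈ S := by
  intro x y p
  induction p with
  | nil => exact fun _ h => h
  | @cons x w y h q ih =>
    intro hE hx
    have hw : w ∈ S := hS x hx w (hE _ (by simp))
    exact ih (fun e he => hE e (by rw [Walk.edges_cons]; exact List.mem_cons_of_mem _ he)) hw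

end Aux

/-- If `u ≠ v` are nonadjacent vertices with the same neighborhood `{a, b, c}`
(of size 3), then in any Hamiltonian cycle of `G` the restriction of the cycle to
`{u, v, a, b, c}` forms a path `x – v – y – u – z` where `{x, y, z} = {a, b, c}`. -/
theorem stmt_3 {V : Type*} [Fintype V] [DecidableEq V] (G : SimpleGraph V)
    (u v a b c : V) (huv : u ≠ v) (hnadj : ¬ G.Adj u v)
    (habc : a ≠ b ∧ b ≠ c ∧ a ≠ c)
    (hNu : G.neighborSet u = {a, b, c}) (hNv : G.neighborSet v = {a, b, c})
    {w : V} (p : G.Walk w w) (hp : p.IsHamiltonianCycle) :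
    ∃ x y z : V, ({x, y, z} : Set V) = {a, b, c} ∧
      s(x, v) ∈ p.edges ∧ s(v, y) ∈ p.edges ∧
      s(y, u) ∈ p.edges ∧ s(u, z) ∈ p.edges := by
  obtain ⟨hab, hbc, hac⟩ := habc
  -- u, v are not in {a,b,c}
  have hu_abc : u ∉ ({a, b, c} : Set V) := by
    intro h
    have : G.Adj u u := by rw [← SimpleGraph.mem_neighborSet, hNu]; exact h
    exact G.irrefl this
  have hv_abc : v ∉ ({a, b, c} : Set V) := by
    intro h
    have : G.Adj v v := by rw [← SimpleGraph.mem_neighborSet, hNv]; exact h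
    exact G.irrefl this
  -- neighbors of v, u along the cycle
  obtain ⟨x, y, hxy, hvx, hvy, hvuniq⟩ := aux_lemC hp v
  obtain ⟨y', z', hyz', huy', huz', huuniq⟩ := aux_lemC hp u
  have hmemv : ∀ s : V, s(v, s) ∈ p.edges → s ∈ ({a, b, c} : Set V) := by
    intro s hs
    have : G.Adj v s := p.adj_of_mem_edges hs
    rw [← hNv]; exact this
  have hmemu : ∀ s : V, s(u, s) ∈ p.edges → s ∈ ({a, b, c} : Set V) := by
    intro s hs
    have : G.Adj u s := p.adj_of_mem_edges hs
    rw [← hNu]; exact this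
  have hx_abc := hmemv x hvx
  have hy_abc := hmemv y hvy
  have hy'_abc := hmemu y' huy'
  have hz'_abc := hmemu z' huz'
  -- the main assembly step
  have assemble : ∀ X Y Z : V, X ∈ ({a, b, c} : Set V) → Y ∈ ({a, b, c} : Set V) →
      Z ∈ ({a, b, c} : Set V) → X ≠ Y → Y ≠ Z →
      s(v, X) ∈ p.edges → s(v, Y) ∈ p.edges → s(u, Y) ∈ p.edges → s(u, Z) ∈ p.edges →
      (∀ r, s(v, r) ∈ p.edges → r = X ∨ r = Y) →
      (∀ r, s(u, r) ∈ p.edges → r = Y ∨ r = Z) →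
      ∃ x y z : V, ({x, y, z} : Set V) = {a, b, c} ∧
        s(x, v) ∈ p.edges ∧ s(v, y) ∈ p.edges ∧
        s(y, u) ∈ p.edges ∧ s(u, z) ∈ p.edges := by
    intro X Y Z hX hY hZ hXY hYZ hvX hvY huY huZ hvU huU
    by_cases hXZ : X = Z
    · -- Then {u, v, X, Y} is closed under cycle adjacency, contradicting
      -- the existence of the third vertex of {a,b,c} on the cycle.
      exfalso
      subst hXZ
      -- neighbors of X along the cycle are exactly u and v
      have hXuniq : ∀ r, s(X, r) ∈ p.edges → r = u ∨ r = v := by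
        obtain ⟨p1, p2, hp12, -, -, hU⟩ := aux_lemC hp X
        have hv' : v = p1 ∨ v = p2 := hU v (by rwa [Sym2.eq_swap])
        have hu' : u = p1 ∨ u = p2 := hU u (by rwa [Sym2.eq_swap])
        intro r hr
        have hrr := hU r hr
        rcases hv' with rfl | rfl <;> rcases hu' with rfl | rfl <;> tauto
      have hYuniq : ∀ r, s(Y, r) ∈ p.edges → r = u ∨ r = v := by
        obtain ⟨p1, p2, hp12, -, -, hU⟩ := aux_lemC hp Y
        have hv' : v = p1 ∨ v = p2 := hU v (by rwa [Sym2.eq_swap])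
        have hu' : u = p1 ∨ u = p2 := hU u (by rwa [Sym2.eq_swap])
        intro r hr
        have hrr := hU r hr
        rcases hv' with rfl | rfl <;> rcases hu' with rfl | rfl <;> tauto
      -- the closed set
      set S : Set V := {u, v, X, Y} with hSdef
      have hclosed : ∀ s ∈ S, ∀ r, s(s, r) ∈ p.edges → r ∈ S := by
        rintro s (rfl | rfl | rfl | rfl) r hr
        · rcases huU r hr with rfl | rfl
          · right; right; right; rfl
          · right; right; left; rfl
        · rcases hvU r hr with rfl | rfl
          · right; right; left; rfl
          · right; right; right; rfl
        · rcases hXuniq r hr with rfl | rfl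
          · left; rfl
          · right; left; rfl
        · rcases hYuniq r hr with rfl | rfl
          · left; rfl
          · right; left; rfl
      -- the third vertex m of {a,b,c}
      obtain ⟨m, hm_abc, hmX, hmY⟩ : ∃ m, m ∈ ({a, b, c} : Set V) ∧ m ≠ X ∧ m ≠ Y := by
        rcases hX with rfl | rfl | rfl <;> rcases hY with rfl | rfl | rfl <;>
          first
          | exact absurd rfl hXY
          | exact ⟨a, by simp, by tauto, by tauto⟩
          | exact ⟨b, by simp, by tauto, by tauto⟩
          | exact ⟨c, by simp, by tauto, by tauto⟩
      have hmS : m ∉ S := by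
        rintro (rfl | rfl | rfl | rfl)
        · exact hu_abc hm_abc
        · exact hv_abc hm_abc
        · exact hmX rfl
        · exact hmY rfl
      -- m is reachable from v along the cycle, hence in S
      have hv_sup : v ∈ p.support := hp.mem_support v
      set q := p.rotate v hv_sup with hqdef
      have hm_tail : m ∈ p.support.tail := by
        have hcount := (Walk.isHamiltonianCycle_iff_isCycle_and_support_count_tail_eq_one.mp
          hp).2 m
        exact List.count_pos_iff.mp (by rw [hcount]; norm_num)
      have hm_q : m ∈ q.support := by
        apply List.mem_of_mem_tail
        exact (p.support_rotate v hv_sup).mem_iff.mpr hm_tail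
      have hqe : ∀ e : Sym2 V, e ∈ q.edges → e ∈ p.edges :=
        fun e he => (p.rotate_edges v hv_sup).mem_iff.mp he
      have := aux_closed (G := G) hclosed (q.takeUntil m hm_q)
        (fun e he => hqe e (q.edges_takeUntil_subset hm_q he))
        (by simp [hSdef])
      exact hmS this
    · -- X, Y, Z are three distinct elements of {a, b, c}
      refine ⟨X, Y, Z, ?_, by rwa [Sym2.eq_swap], hvY, by rwa [Sym2.eq_swap], huZ⟩
      rcases hX with rfl | rfl | rfl <;> rcases hY with rfl | rfl | rfl <;>
        rcases hZ with rfl | rfl | rfl <;>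
        first
        | exact absurd rfl hXY
        | exact absurd rfl hYZ
        | exact absurd rfl hXZ
        | rfl
        | (ext m; constructor <;> (rintro (rfl | rfl | rfl) <;> simp))
  -- the pairs {x,y} and {y',z'} share an element
  have hshare : y' = x ∨ y' = y ∨ z' = x ∨ z' = y := by
    by_contra hcon
    push_neg at hcon
    obtain ⟨h1, h2, h3, h4⟩ := hcon
    rcases hx_abc with rfl | rfl | rfl <;> rcases hy_abc with rfl | rfl | rfl <;>
      rcases hy'_abc with rfl | rfl | rfl <;> rcases hz'_abc with rfl | rfl | rfl <;>
      simp_all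
  rcases hshare with rfl | rfl | rfl | rfl
  · exact assemble y y' z' hy_abc hx_abc hz'_abc (Ne.symm hxy) hyz' hvy hvx huy' huz'
      (fun r hr => (hvuniq r hr).symm) huuniq
  · exact assemble x y' z' hx_abc hy_abc hz'_abc hxy hyz' hvx hvy huy' huz'
      hvuniq huuniq
  · exact assemble y z' y' hy_abc hx_abc hy'_abc (Ne.symm hxy) (Ne.symm hyz') hvy hvx huz' huy'
      (fun r hr => (hvuniq r hr).symm) (fun r hr => (huuniq r hr).symm)
  · exact assemble x z' y' hx_abc hy_abc hy'_abc hxy (Ne.symm hyz') hvx hvy huz' huy'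
      hvuniq (fun r hr => (huuniq r hr).symm)
end

section
/- Let B = (M, N, E) be a bipartite graph with |M| = |N| = r, every vertex of N having degree 2 or 3, and let G be the intersection-style graph whose maximal cliques are: K_i = {X_i} ∪ {A_{sj} : m_s n_j ∈ E, s ≤ i} for each i ≤ r; K'_j = {Y_j} ∪ {A_{ij} : m_i n_j ∈ E} for each j ≤ r; and K''_j = {Z_j} ∪ {A_{ij} : m_i n_j ∈ E} for each j with d(n_j) = 3. Then G is a rooted directed path graph: there is a rooted directed tree on its maximal cliques such that for every vertex v of G, the cliques containing v induce a directed path. -/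
/-- The vertex type of the graph `G` constructed from the bipartite graph
`B = (M, N, E)` (with `E i j` meaning `m_i n_j ∈ E`): the vertices `X_i`, `Y_j`,
`Z_j` (only for `j` with `d(n_j) = 3`) and `A_{ij}` (only for edges `m_i n_j`). -/
def Vtx (r : ℕ) (E : Fin r → Fin r → Prop) : Type :=
  {v : Fin r ⊕ Fin r ⊕ Fin r ⊕ Fin r × Fin r //
    match v with
    | Sum.inl _ => True
    | Sum.inr (Sum.inl _) => True
    | Sum.inr (Sum.inr (Sum.inl j)) => {i : Fin r | E i j}.ncard = 3
    | Sum.inr (Sum.inr (Sum.inr (i, j))) => E i j}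

/-- The vertex `X_i`. -/
def Xv {r : ℕ} {E : Fin r → Fin r → Prop} (i : Fin r) : Vtx r E :=
  ⟨Sum.inl i, trivial⟩

/-- The vertex `Y_j`. -/
def Yv {r : ℕ} {E : Fin r → Fin r → Prop} (j : Fin r) : Vtx r E :=
  ⟨Sum.inr (Sum.inl j), trivial⟩

/-- The vertex `Z_j`, present when `d(n_j) = 3`. -/
def Zv {r : ℕ} {E : Fin r → Fin r → Prop} (j : Fin r)
    (hj : {i : Fin r | E i j}.ncard = 3) : Vtx r E :=
  ⟨Sum.inr (Sum.inr (Sum.inl j)), hj⟩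

/-- The vertex `A_{ij}`, present when `m_i n_j ∈ E`. -/
def Av {r : ℕ} {E : Fin r → Fin r → Prop} (i j : Fin r) (h : E i j) : Vtx r E :=
  ⟨Sum.inr (Sum.inr (Sum.inr (i, j))), h⟩

/-- Membership in the clique `K_s = {X_s} ∪ {A_{ij} : m_i n_j ∈ E, i ≤ s}`. -/
def inK {r : ℕ} {E : Fin r → Fin r → Prop} (s : Fin r) (v : Vtx r E) : Prop :=
  match v.val with
  | Sum.inl s' => s' = s
  | Sum.inr (Sum.inr (Sum.inr (i, _))) => i ≤ s
  | _ => False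

/-- Membership in the clique `K'_j = {Y_j} ∪ {A_{ij} : m_i n_j ∈ E}`. -/
def inK' {r : ℕ} {E : Fin r → Fin r → Prop} (j : Fin r) (v : Vtx r E) : Prop :=
  match v.val with
  | Sum.inr (Sum.inl j') => j' = j
  | Sum.inr (Sum.inr (Sum.inr (_, j'))) => j' = j
  | _ => False

/-- Membership in the clique `K''_j = {Z_j} ∪ {A_{ij} : m_i n_j ∈ E}`
(a clique of `G` only when `d(n_j) = 3`). -/
def inK'' {r : ℕ} {E : Fin r → Fin r → Prop} (j : Fin r) (v : Vtx r E) : Prop :=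
  match v.val with
  | Sum.inr (Sum.inr (Sum.inl j')) => j' = j
  | Sum.inr (Sum.inr (Sum.inr (_, j'))) => j' = j
  | _ => False

/-- The graph `G` of the reduction: two distinct vertices are adjacent iff they
lie in a common clique `K_s`, `K'_j`, or `K''_j` (the latter for `d(n_j) = 3`). -/
def Gr (r : ℕ) (E : Fin r → Fin r → Prop) : SimpleGraph (Vtx r E) :=
  SimpleGraph.fromRel (fun u v =>
    (∃ s, inK s u ∧ inK s v) ∨ (∃ j, inK' j u ∧ inK' j v) ∨
      (∃ j, {i : Fin r | E i j}.ncard = 3 ∧ inK'' j u ∧ inK'' j v))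

instance {r : ℕ} {E : Fin r → Fin r → Prop} : DecidableEq (Vtx r E) := by
  unfold Vtx; infer_instance

/-- The set of (indices of) maximal cliques of `G`: the cliques `K_i` (left),
`K'_j` (middle), and `K''_j` for `j` with `d(n_j) = 3` (right). -/
def CT (r : ℕ) (E : Fin r → Fin r → Prop) : Type :=
  Fin r ⊕ Fin r ⊕ {j : Fin r // {i : Fin r | E i j}.ncard = 3}

/-- The clique of `G` corresponding to an index in `CT`. -/
def cliqueOf {r : ℕ} {E : Fin r → Fin r → Prop} : CT r E → (Vtx r E → Prop)
  | Sum.inl i => inK i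
  | Sum.inr (Sum.inl j) => inK' j
  | Sum.inr (Sum.inr j) => inK'' j.val

/-- A set `s` of vertices induces a directed path for the arc relation `A` if its
elements can be listed without repetition as `v₀, v₁, …, v_k` such that consecutive
elements are joined by an arc and every arc between elements of `s` joins
consecutive elements of the list. -/
def IsDirPathOn {W : Type*} (A : W → W → Prop) (s : Set W) : Prop :=
  ∃ l : List W, l.Nodup ∧ (∀ x, x ∈ l ↔ x ∈ s) ∧ l.Chain' A ∧
    ∀ x ∈ s, ∀ y ∈ s, A x y → ∃ n, l[n]? = some x ∧ l[n + 1]? = some y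

/-! The cliques form a rooted tree in which `K_0 → K_1 → ⋯ → K_{r-1}` is a directed path,
every `K'_j` is a child of `K_{r-1}` and every `K''_j` a child of `K'_j`. A vertex `X_i`, `Y_j`
or `Z_j` lies in a single clique, while `A_{ij}` lies exactly in `K_i, …, K_{r-1}, K'_j` (and
`K''_j`), a directed path of this tree.

A graph given by a parent function that strictly lowers a rank is a tree: it is connected since
every vertex reaches the root, and it has one edge fewer than vertices, since each edge is
`{parent v, v}` for exactly one non-root `v`. -/

open SimpleGraph

section ParentArc

variable {W : Type*} {parent : W → W} {root : W} {rank : W → ℕ}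

def ParentArc (parent : W → W) (root : W) (u v : W) : Prop := v ≠ root ∧ u = parent v

lemma existsUnique_setOf_parentArc_eq_empty (parent : W → W) (root : W) :
    ∃! c, {u | ParentArc parent root u c} = ∅ := by
  refine ⟨root, by simp [ParentArc], fun c hc => by_contra fun hne => ?_⟩
  exact (Set.eq_empty_iff_forall_notMem.1 hc) (parent c) ⟨hne, rfl⟩

variable (hrank : ∀ v, v ≠ root → rank (parent v) < rank v)
include hrank

lemma parent_ne_self {v : W} (hv : v ≠ root) : parent v ≠ v :=
  fun h => (hrank v hv).ne (congrArg rank h)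

lemma fromRel_parentArc_adj {v : W} (hv : v ≠ root) :
    (fromRel (ParentArc parent root)).Adj (parent v) v :=
  (fromRel_adj _ _ _).2 ⟨parent_ne_self hrank hv, Or.inl ⟨hv, rfl⟩⟩

lemma reachable_root_fromRel_parentArc (v : W) :
    (fromRel (ParentArc parent root)).Reachable root v := by
  induction v using (measure rank).wf.induction with
  | _ v ih =>
    by_cases hv : v = root
    · rw [hv]
    · exact (ih _ (hrank v hv)).trans (fromRel_parentArc_adj hrank hv).reachable

lemma connected_fromRel_parentArc : (fromRel (ParentArc parent root)).Connected :=
  have : Nonempty W := ⟨root⟩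
  ⟨fun u v => (reachable_root_fromRel_parentArc hrank u).symm.trans
    (reachable_root_fromRel_parentArc hrank v)⟩

noncomputable def edgeSetFromRelParentArcEquiv :
    {v // v ≠ root} ≃ (fromRel (ParentArc parent root)).edgeSet :=
  Equiv.ofBijective (fun v => ⟨s(parent v, v), fromRel_parentArc_adj hrank v.2⟩) <| by
    constructor
    · rintro ⟨v, hv⟩ ⟨w, hw⟩ h
      obtain ⟨-, h⟩ | ⟨hvw, hwv⟩ := Sym2.eq_iff.1 (congrArg Subtype.val h)
      · exact Subtype.ext h
      · have h1 := hrank _ hv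
        have h2 := hrank _ hw
        rw [hvw] at h1
        rw [← hwv] at h2
        exact absurd (h1.trans h2) (lt_irrefl _)
    · rintro ⟨e, he⟩
      induction e using Sym2.ind with
      | _ u v =>
        obtain ⟨-, ⟨hv, huv⟩ | ⟨hu, hvu⟩⟩ := (fromRel_adj _ _ _).1 he
        · dsimp only at hv huv
          subst huv
          exact ⟨⟨v, hv⟩, rfl⟩
        · dsimp only at hu hvu
          subst hvu
          exact ⟨⟨u, hu⟩, Subtype.ext Sym2.eq_swap⟩

lemma isTree_fromRel_parentArc [Finite W] : (fromRel (ParentArc parent root)).IsTree := by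
  refine isTree_iff_connected_and_card.2 ⟨connected_fromRel_parentArc hrank, ?_⟩
  have := Fintype.ofFinite W
  have : Nonempty W := ⟨root⟩
  classical
  rw [← Nat.card_congr (edgeSetFromRelParentArcEquiv hrank), Nat.card_eq_fintype_card,
    Nat.card_eq_fintype_card, Fintype.card_subtype_compl, Fintype.card_subtype_eq]
  exact Nat.sub_add_cancel Fintype.card_pos

lemma isDirPathOn_parentArc_of_isChain {l : List W} (hl : l.IsChain (ParentArc parent root)) :
    IsDirPathOn (ParentArc parent root) {x | x ∈ l} := by
  have hsorted : l.Pairwise (rank · < rank ·) :=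
    List.isChain_iff_pairwise.1 (hl.imp fun _ b ⟨hb, hab⟩ => hab ▸ hrank b hb)
  refine ⟨l, hsorted.imp fun h => ne_of_apply_ne rank h.ne, fun _ => Iff.rfl, hl, ?_⟩
  rintro x hx y hy ⟨hyr, rfl⟩
  obtain ⟨n, hn, rfl⟩ := List.getElem_of_mem hy
  cases n with
  | zero =>
    -- the head of `l` has the least rank on `l`, so its parent is not on `l`
    cases l with
    | nil => simp at hn
    | cons a t =>
      rcases List.mem_cons.1 hx with h | h
      · exact absurd h (parent_ne_self hrank hyr)
      · exact absurd ((List.pairwise_cons.1 hsorted).1 _ h) (hrank _ hyr).not_gt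
  | succ k =>
    refine ⟨k, ?_, List.getElem?_eq_getElem hn⟩
    rw [List.getElem?_eq_getElem (by omega), (List.isChain_iff_getElem.1 hl k hn).2]

end ParentArc

section CliqueTree

variable {r : ℕ} {E : Fin r → Fin r → Prop}

/-- `CT r E` with its sum structure visible to `simp` and instance search. -/
abbrev CliqueIndex (r : ℕ) (E : Fin r → Fin r → Prop) : Type :=
  Fin r ⊕ Fin r ⊕ {j : Fin r // {i : Fin r | E i j}.ncard = 3}

def cliqueParent : CliqueIndex r E → CliqueIndex r E
  | .inl i => .inl ⟨i.val - 1, by omega⟩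
  | .inr (.inl j) => .inl ⟨r - 1, Nat.sub_one_lt_of_lt j.isLt⟩
  | .inr (.inr j) => .inr (.inl j.val)

def cliqueDepth : CliqueIndex r E → ℕ
  | .inl i => i
  | .inr (.inl _) => r
  | .inr (.inr _) => r + 1

def cliqueRoot [NeZero r] : CliqueIndex r E := .inl 0

lemma cliqueDepth_cliqueParent_lt [NeZero r] :
    ∀ c : CliqueIndex r E, c ≠ cliqueRoot → cliqueDepth (cliqueParent c) < cliqueDepth c
  | .inl i, hi => by
    have : (i : ℕ) ≠ 0 := fun h => hi (congrArg Sum.inl (Fin.ext h))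
    show i.val - 1 < i.val
    omega
  | .inr (.inl _), _ => Nat.sub_one_lt_of_lt (Nat.pos_of_neZero r)
  | .inr (.inr _), _ => Nat.lt_succ_self r

def kCliquesFrom (i : Fin r) : List (CliqueIndex r E) :=
  List.ofFn fun t : Fin (r - i) => .inl ⟨i.val + t.val, by omega⟩

lemma inl_mem_kCliquesFrom {i s : Fin r} :
    (.inl s : CliqueIndex r E) ∈ kCliquesFrom i ↔ i ≤ s := by
  simp only [kCliquesFrom, List.mem_ofFn, Sum.inl.injEq, Fin.ext_iff, Fin.le_def]
  exact ⟨fun ⟨t, ht⟩ => by omega, fun h => ⟨⟨s - i, by omega⟩, by simp; omega⟩⟩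

lemma inr_notMem_kCliquesFrom {i : Fin r} {w} : (.inr w : CliqueIndex r E) ∉ kCliquesFrom i := by
  simp [kCliquesFrom]

lemma isChain_kCliquesFrom [NeZero r] (i : Fin r) :
    (kCliquesFrom i : List (CliqueIndex r E)).IsChain (ParentArc cliqueParent cliqueRoot) := by
  refine List.isChain_ofFn.2 fun t ht => ⟨fun h => ?_, ?_⟩
  · simp only [cliqueRoot, Sum.inl.injEq, Fin.ext_iff, Fin.val_zero] at h
    omega
  · simp only [cliqueParent, Sum.inl.injEq, Fin.ext_iff]
    omega

lemma getLast?_kCliquesFrom (i : Fin r) : (kCliquesFrom i : List (CliqueIndex r E)).getLast? =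
    some (.inl ⟨r - 1, Nat.sub_one_lt_of_lt i.isLt⟩) := by
  simp only [kCliquesFrom]
  rw [List.getLast?_eq_some_getLast (by simp; omega), List.getLast_ofFn]
  simp only [Option.some.injEq, Sum.inl.injEq, Fin.ext_iff]
  omega

noncomputable def k''Cliques (j : Fin r) : List (CliqueIndex r E) :=
  if h : {i : Fin r | E i j}.ncard = 3 then [.inr (.inr ⟨j, h⟩)] else []

noncomputable def cliquesContaining : Vtx r E → List (CliqueIndex r E)
  | ⟨.inl i, _⟩ => [.inl i]
  | ⟨.inr (.inl j), _⟩ => [.inr (.inl j)]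
  | ⟨.inr (.inr (.inl j)), h⟩ => [.inr (.inr ⟨j, h⟩)]
  | ⟨.inr (.inr (.inr (i, j))), _⟩ => kCliquesFrom i ++ .inr (.inl j) :: k''Cliques j

lemma mem_cliquesContaining {v : Vtx r E} {c : CliqueIndex r E} :
    c ∈ cliquesContaining v ↔ cliqueOf c v := by
  obtain ⟨i | j | j | ⟨i, j⟩, -⟩ := v <;> rcases c with s | j' | ⟨j', h'⟩ <;>
    simp_all [cliquesContaining, cliqueOf, inK, inK', inK'', inl_mem_kCliquesFrom,
      inr_notMem_kCliquesFrom, k''Cliques, eq_comm]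

lemma isChain_cliquesContaining [NeZero r] (v : Vtx r E) :
    (cliquesContaining v).IsChain (ParentArc cliqueParent cliqueRoot) := by
  obtain ⟨i | j | j | ⟨i, j⟩, -⟩ := v
  iterate 3 exact List.isChain_singleton _
  refine List.isChain_append.2 ⟨isChain_kCliquesFrom i, ?_, ?_⟩
  · unfold k''Cliques
    split_ifs
    · exact List.isChain_pair.2 ⟨Sum.inr_ne_inl, rfl⟩
    · exact List.isChain_singleton _
  · simp only [getLast?_kCliquesFrom, List.head?_cons, Option.mem_def, Option.some.injEq]
    rintro _ rfl _ rfl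
    exact ⟨Sum.inr_ne_inl, rfl⟩

end CliqueTree

theorem stmt_8_general (r : ℕ) (hr : 2 ≤ r) (E : Fin r → Fin r → Prop) :
    ∃ A : CT r E → CT r E → Prop,
      (SimpleGraph.fromRel A).IsTree ∧
      (∃! c : CT r E, {u : CT r E | A u c} = ∅) ∧
      ∀ v : Vtx r E, IsDirPathOn A {c : CT r E | cliqueOf c v} := by
  have : NeZero r := ⟨by omega⟩
  have hdepth := cliqueDepth_cliqueParent_lt (E := E)
  refine ⟨ParentArc cliqueParent cliqueRoot,
    isTree_fromRel_parentArc (W := CliqueIndex r E) hdepth,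
    existsUnique_setOf_parentArc_eq_empty _ _, fun v => ?_⟩
  have hpath := isDirPathOn_parentArc_of_isChain hdepth (isChain_cliquesContaining v)
  simp only [mem_cliquesContaining] at hpath
  exact hpath

/-- The graph `G` of the reduction is a rooted directed path graph: there is a
rooted directed tree on its maximal cliques (underlying graph a tree, with exactly
one vertex of in-degree zero) such that for every vertex `v` of `G`, the cliques
containing `v` induce a directed path. -/
theorem stmt_8 (r : ℕ) (hr : 2 ≤ r) (E : Fin r → Fin r → Prop)
    (hdeg : ∀ j : Fin r, {i : Fin r | E i j}.ncard = 2 ∨ {i : Fin r | E i j}.ncard = 3) :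
    ∃ A : CT r E → CT r E → Prop,
      (SimpleGraph.fromRel A).IsTree ∧
      (∃! c : CT r E, {u : CT r E | A u c} = ∅) ∧
      ∀ v : Vtx r E, IsDirPathOn A {c : CT r E | cliqueOf c v} :=
  stmt_8_general r hr E
end

section
/- In any Hamiltonian cycle of the graph G constructed by the reduction, for each j with d(n_j) = 3 the cycle contains a subpath of the form A_{ij}, Y_j, A_{hj}, Z_j, A_{kj} where {m_i, m_h, m_k} is the neighborhood of n_j in B (up to relabeling of i, h, k), and for each j with d(n_j) = 2 the cycle contains the subpath A_{ij}, Y_j, A_{kj} where m_i and m_k are the two neighbors of n_j. -/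
/-! In a Hamiltonian cycle every vertex has exactly two cycle-neighbours, and those of `Y_j`
and `Z_j` are vertices `A_{ij}`, so each of them picks out a pair of rows in the neighbourhood
of `n_j`. When `d(n_j) = 2` this pair is the whole neighbourhood. When `d(n_j) = 3` the pairs
of `Y_j` and `Z_j` differ, since otherwise `Y_j, A_{aj}, Z_j, A_{cj}` would close up a 4-cycle
missing `X_j`; two distinct pairs inside a triple share exactly one row `h`, which gives the
subpath `A_{ij}, Y_j, A_{hj}, Z_j, A_{kj}`. -/

namespace Set

variable {α : Type*} {S T U : Set α} {a : α}

lemma exists_ne_eq_pair_of_mem (hS : S.ncard = 2) (ha : a ∈ S) :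
    ∃ i, i ≠ a ∧ S = {i, a} := by
  obtain ⟨x, y, hxy, rfl⟩ := ncard_eq_two.1 hS
  rcases ha with rfl | rfl
  · exact ⟨y, hxy.symm, pair_comm _ _⟩
  · exact ⟨x, hxy, rfl⟩

lemma exists_eq_pair_eq_pair_of_ncard_eq_three (hU : U.ncard = 3) (hS : S.ncard = 2)
    (hT : T.ncard = 2) (hSU : S ⊆ U) (hTU : T ⊆ U) (hST : S ≠ T) :
    ∃ i h k, i ≠ h ∧ h ≠ k ∧ i ≠ k ∧ S = {i, h} ∧ T = {h, k} ∧ U = {i, h, k} := by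
  have hUfin : U.Finite := finite_of_ncard_ne_zero (by omega)
  obtain ⟨h, hhS, hhT⟩ : ∃ h ∈ S, h ∈ T := by
    by_contra! hdisj
    have := ncard_le_ncard (union_subset hSU hTU) hUfin
    rw [ncard_union_eq (disjoint_left.2 hdisj) (hUfin.subset hSU) (hUfin.subset hTU)] at this
    omega
  obtain ⟨i, hih, rfl⟩ := exists_ne_eq_pair_of_mem hS hhS
  obtain ⟨k, hkh, rfl⟩ := exists_ne_eq_pair_of_mem hT hhT
  have hik : i ≠ k := by rintro rfl; exact hST rfl
  refine ⟨i, h, k, hih, hkh.symm, hik, rfl, pair_comm _ _,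
    (eq_of_subset_of_ncard_le ?_ ?_ hUfin).symm⟩
  · exact insert_subset (hSU (by simp)) <|
      insert_subset (hSU (by simp)) (by simpa using hTU (by simp))
  · rw [hU, ncard_eq_three.2 ⟨i, h, k, hih, hik, hkh.symm, rfl⟩]

end Set

namespace SimpleGraph.Walk

variable {V : Type*} {G : SimpleGraph V} {u v w x y : V}

lemma IsCycle.exists_ne_mem_edges {p : G.Walk u u} (hp : p.IsCycle) (hv : v ∈ p.support) :
    ∃ x y, x ≠ y ∧ s(v, x) ∈ p.edges ∧ s(v, y) ∈ p.edges := by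
  obtain ⟨x, y, hxy, hN⟩ := Set.ncard_eq_two.1 (hp.ncard_neighborSet_toSubgraph_eq_two hv)
  have hmem (z : V) : s(v, z) ∈ p.edges ↔ z = x ∨ z = y := by
    rw [← mem_edges_toSubgraph, Subgraph.mem_edgeSet, ← Subgraph.mem_neighborSet, hN]
    rfl
  exact ⟨x, y, hxy, (hmem x).2 (Or.inl rfl), (hmem y).2 (Or.inr rfl)⟩

lemma IsCycle.eq_or_eq_of_mem_edges {p : G.Walk u u} (hp : p.IsCycle) (hxy : x ≠ y)
    (hx : s(v, x) ∈ p.edges) (hy : s(v, y) ∈ p.edges) (hw : s(v, w) ∈ p.edges) :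
    w = x ∨ w = y := by
  have hN := hp.ncard_neighborSet_toSubgraph_eq_two (p.fst_mem_support_of_mem_edges hx)
  have hmem (z : V) : s(v, z) ∈ p.edges ↔ z ∈ p.toSubgraph.neighborSet v := by
    rw [← mem_edges_toSubgraph, Subgraph.mem_edgeSet, Subgraph.mem_neighborSet]
  have hpair : {x, y} = p.toSubgraph.neighborSet v := by
    refine Set.eq_of_subset_of_ncard_le ?_ (by rw [hN, Set.ncard_pair hxy])
      (Set.finite_of_ncard_ne_zero (by omega))
    rintro z (rfl | rfl)
    exacts [(hmem _).1 hx, (hmem _).1 hy]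
  simpa [← hpair] using (hmem w).1 hw

lemma mem_of_edges_closed (p : G.Walk u v) {P : Set V}
    (hP : ∀ x y, s(x, y) ∈ p.edges → x ∈ P → y ∈ P) (hx : x ∈ p.support) (hxP : x ∈ P)
    (hy : y ∈ p.support) : y ∈ P := by
  have key : (∀ z ∈ p.support, z ∈ P) ∨ ∀ z ∈ p.support, z ∉ P := by
    clear hx hxP hy
    induction p with
    | nil => simpa using em _
    | @cons a c d hadj q ih =>
      have hac : a ∈ P ↔ c ∈ P := ⟨hP a c (by simp), hP c a (by simp [Sym2.eq_swap])⟩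
      rcases ih (fun x y h => hP x y (by simp [h])) with hq | hq
      · exact .inl <| List.forall_mem_cons.2 ⟨hac.2 (hq c q.start_mem_support), hq⟩
      · exact .inr <| List.forall_mem_cons.2 ⟨mt hac.1 (hq c q.start_mem_support), hq⟩
  exact key.elim (· y hy) fun h => absurd hxP (h x hx)

end SimpleGraph.Walk

section Reduction

open SimpleGraph

variable {r : ℕ} {E : Fin r → Fin r → Prop}

lemma Av_inj {i i' j : Fin r} {hi : E i j} {hi' : E i' j} :
    (Av i j hi : Vtx r E) = Av i' j hi' ↔ i = i' :=
  ⟨fun h => by simpa [Av] using congrArg Subtype.val h, by rintro rfl; rfl⟩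

lemma Gr_adj_Yv {j : Fin r} {v : Vtx r E} (h : (Gr r E).Adj (Yv j) v) :
    ∃ i hi, v = Av i j hi := by
  rw [Gr, fromRel_adj] at h
  obtain ⟨(x | y | z | ⟨i, j'⟩), hv⟩ := v <;> simp only [Yv, inK, inK', inK''] at h
  · simp at h
  · obtain ⟨hne, rfl | rfl⟩ := (by simpa using h) <;> exact (hne rfl).elim
  · simp at h
  · obtain ⟨-, rfl | rfl⟩ := (by simpa using h) <;> exact ⟨i, hv, rfl⟩

lemma Gr_adj_Zv {j : Fin r} (hj : {i : Fin r | E i j}.ncard = 3) {v : Vtx r E}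
    (h : (Gr r E).Adj (Zv j hj) v) : ∃ i hi, v = Av i j hi := by
  rw [Gr, fromRel_adj] at h
  obtain ⟨(x | y | z | ⟨i, j'⟩), hv⟩ := v <;> simp only [Zv, inK, inK', inK''] at h
  · simp at h
  · simp at h
  · obtain ⟨hne, ⟨-, rfl⟩ | ⟨-, rfl⟩⟩ := (by simpa using h) <;> exact (hne rfl).elim
  · obtain ⟨-, ⟨-, rfl⟩ | ⟨-, rfl⟩⟩ := (by simpa using h) <;> exact ⟨i, hv, rfl⟩

def nbrRows {u w : Vtx r E} (p : (Gr r E).Walk u w) (v : Vtx r E) (j : Fin r) : Set (Fin r) :=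
  {i | ∃ hi : E i j, s(v, Av i j hi) ∈ p.edges}

variable {b : Vtx r E} {p : (Gr r E).Walk b b}

lemma nbrRows_subset (v : Vtx r E) (j : Fin r) : nbrRows p v j ⊆ {i | E i j} :=
  fun _ ⟨hi, _⟩ => hi

lemma ncard_nbrRows {v : Vtx r E} {j : Fin r} (hp : p.IsCycle) (hv : v ∈ p.support)
    (hA : ∀ w, (Gr r E).Adj v w → ∃ i hi, w = Av i j hi) : (nbrRows p v j).ncard = 2 := by
  obtain ⟨x, y, hxy, hx, hy⟩ := hp.exists_ne_mem_edges hv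
  obtain ⟨a, ha, rfl⟩ := hA x (p.adj_of_mem_edges hx)
  obtain ⟨c, hc, rfl⟩ := hA y (p.adj_of_mem_edges hy)
  have hac : a ≠ c := fun h => hxy (Av_inj.2 h)
  suffices nbrRows p v j = {a, c} by rw [this, Set.ncard_pair hac]
  ext i
  constructor
  · rintro ⟨hi, hvi⟩
    simpa only [Av_inj, Set.mem_insert_iff, Set.mem_singleton_iff] using
      hp.eq_or_eq_of_mem_edges hxy hx hy hvi
  · rintro (rfl | rfl)
    exacts [⟨ha, hx⟩, ⟨hc, hy⟩]

lemma ncard_nbrRows_Yv (hp : p.IsHamiltonianCycle) (j : Fin r) :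
    (nbrRows p (Yv j) j).ncard = 2 :=
  ncard_nbrRows hp.isCycle (hp.mem_support _) fun _ => Gr_adj_Yv

lemma ncard_nbrRows_Zv (hp : p.IsHamiltonianCycle) {j : Fin r}
    (hj : {i : Fin r | E i j}.ncard = 3) : (nbrRows p (Zv j hj) j).ncard = 2 :=
  ncard_nbrRows hp.isCycle (hp.mem_support _) fun _ => Gr_adj_Zv hj

lemma nbrRows_Yv_ne_Zv (hp : p.IsHamiltonianCycle) {j : Fin r}
    (hj : {i : Fin r | E i j}.ncard = 3) : nbrRows p (Yv j) j ≠ nbrRows p (Zv j hj) j := by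
  intro hYZ
  obtain ⟨a, c, hac, hY⟩ := Set.ncard_eq_two.1 (ncard_nbrRows_Yv hp j)
  obtain ⟨ha, hYa⟩ : a ∈ nbrRows p (Yv j) j := by simp [hY]
  obtain ⟨hc, hYc⟩ : c ∈ nbrRows p (Yv j) j := by simp [hY]
  obtain ⟨_, hZa⟩ : a ∈ nbrRows p (Zv j hj) j := by simp [← hYZ, hY]
  obtain ⟨_, hZc⟩ : c ∈ nbrRows p (Zv j hj) j := by simp [← hYZ, hY]
  have hAac : (Av a j ha : Vtx r E) ≠ Av c j hc := mt Av_inj.1 hac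
  have hYZv : (Yv j : Vtx r E) ≠ Zv j hj := fun h => by
    simpa [Yv, Zv] using congrArg Subtype.val h
  have hcyc := hp.isCycle
  have hclosed : ∀ x y, s(x, y) ∈ p.edges →
      x ∈ ({Yv j, Zv j hj, Av a j ha, Av c j hc} : Set (Vtx r E)) →
      y ∈ ({Yv j, Zv j hj, Av a j ha, Av c j hc} : Set (Vtx r E)) := by
    rintro x y hxy (rfl | rfl | rfl | rfl)
    · rcases hcyc.eq_or_eq_of_mem_edges hAac hYa hYc hxy with rfl | rfl <;> simp
    · rcases hcyc.eq_or_eq_of_mem_edges hAac hZa hZc hxy with rfl | rfl <;> simp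
    · rcases hcyc.eq_or_eq_of_mem_edges hYZv (Sym2.eq_swap ▸ hYa) (Sym2.eq_swap ▸ hZa) hxy
        with rfl | rfl <;> simp
    · rcases hcyc.eq_or_eq_of_mem_edges hYZv (Sym2.eq_swap ▸ hYc) (Sym2.eq_swap ▸ hZc) hxy
        with rfl | rfl <;> simp
  have hX := p.mem_of_edges_closed hclosed (hp.mem_support (Yv j)) (by simp)
    (hp.mem_support (Xv j))
  rcases hX with h | h | h | h <;> simpa [Xv, Yv, Zv, Av] using congrArg Subtype.val h

end Reduction

theorem stmt_12_general (r : ℕ) (E : Fin r → Fin r → Prop)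
    {b : Vtx r E} (p : (Gr r E).Walk b b) (hp : p.IsHamiltonianCycle) :
    (∀ (j : Fin r) (hj : {i : Fin r | E i j}.ncard = 3),
      ∃ (i h k : Fin r) (hi : E i j) (hh : E h j) (hk : E k j),
        i ≠ h ∧ h ≠ k ∧ i ≠ k ∧ ({i, h, k} : Set (Fin r)) = {i' : Fin r | E i' j} ∧
        s(Av i j hi, Yv j) ∈ p.edges ∧ s(Yv j, Av h j hh) ∈ p.edges ∧
        s(Av h j hh, Zv j hj) ∈ p.edges ∧ s(Zv j hj, Av k j hk) ∈ p.edges) ∧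
    (∀ j : Fin r, {i : Fin r | E i j}.ncard = 2 →
      ∃ (i k : Fin r) (hi : E i j) (hk : E k j),
        i ≠ k ∧ ({i, k} : Set (Fin r)) = {i' : Fin r | E i' j} ∧
        s(Av i j hi, Yv j) ∈ p.edges ∧ s(Yv j, Av k j hk) ∈ p.edges) := by
  constructor
  · intro j hj
    obtain ⟨i, h, k, hih, hhk, hik, hY, hZ, hN⟩ :=
      Set.exists_eq_pair_eq_pair_of_ncard_eq_three hj (ncard_nbrRows_Yv hp j)
        (ncard_nbrRows_Zv hp hj) (nbrRows_subset _ _) (nbrRows_subset _ _) (nbrRows_Yv_ne_Zv hp hj)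
    obtain ⟨hi, hYi⟩ : i ∈ nbrRows p (Yv j) j := by simp [hY]
    obtain ⟨hh, hYh⟩ : h ∈ nbrRows p (Yv j) j := by simp [hY]
    obtain ⟨_, hZh⟩ : h ∈ nbrRows p (Zv j hj) j := by simp [hZ]
    obtain ⟨hk, hZk⟩ : k ∈ nbrRows p (Zv j hj) j := by simp [hZ]
    exact ⟨i, h, k, hi, hh, hk, hih, hhk, hik, hN.symm, Sym2.eq_swap ▸ hYi, hYh,
      Sym2.eq_swap ▸ hZh, hZk⟩
  · intro j hj
    have hYN : nbrRows p (Yv j) j = {i' | E i' j} :=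
      Set.eq_of_subset_of_ncard_le (nbrRows_subset _ _) (by rw [hj, ncard_nbrRows_Yv hp j])
        (Set.toFinite _)
    obtain ⟨i, k, hik, hY⟩ := Set.ncard_eq_two.1 (ncard_nbrRows_Yv hp j)
    obtain ⟨hi, hYi⟩ : i ∈ nbrRows p (Yv j) j := by simp [hY]
    obtain ⟨hk, hYk⟩ : k ∈ nbrRows p (Yv j) j := by simp [hY]
    exact ⟨i, k, hi, hk, hik, hY ▸ hYN, Sym2.eq_swap ▸ hYi, hYk⟩

/-- In any Hamiltonian cycle of the graph `G` of the reduction: for each `j` with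
`d(n_j) = 3` the cycle contains a subpath `A_{ij}, Y_j, A_{hj}, Z_j, A_{kj}` where
`{m_i, m_h, m_k}` is the neighborhood of `n_j` in `B`, and for each `j` with
`d(n_j) = 2` the cycle contains the subpath `A_{ij}, Y_j, A_{kj}` where `m_i, m_k`
are the two neighbors of `n_j`. -/
theorem stmt_12 (r : ℕ) (hr : 2 ≤ r) (E : Fin r → Fin r → Prop)
    (hdeg : ∀ j : Fin r, {i : Fin r | E i j}.ncard = 2 ∨ {i : Fin r | E i j}.ncard = 3)
    {b : Vtx r E} (p : (Gr r E).Walk b b) (hp : p.IsHamiltonianCycle) :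
    (∀ (j : Fin r) (hj : {i : Fin r | E i j}.ncard = 3),
      ∃ (i h k : Fin r) (hi : E i j) (hh : E h j) (hk : E k j),
        i ≠ h ∧ h ≠ k ∧ i ≠ k ∧ ({i, h, k} : Set (Fin r)) = {i' : Fin r | E i' j} ∧
        s(Av i j hi, Yv j) ∈ p.edges ∧ s(Yv j, Av h j hh) ∈ p.edges ∧
        s(Av h j hh, Zv j hj) ∈ p.edges ∧ s(Zv j hj, Av k j hk) ∈ p.edges) ∧
    (∀ j : Fin r, {i : Fin r | E i j}.ncard = 2 →
      ∃ (i k : Fin r) (hi : E i j) (hk : E k j),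
        i ≠ k ∧ ({i, k} : Set (Fin r)) = {i' : Fin r | E i' j} ∧
        s(Av i j hi, Yv j) ∈ p.edges ∧ s(Yv j, Av k j hk) ∈ p.edges) :=
  stmt_12_general r E p hp
end

section
/- In any Hamiltonian cycle of the graph G constructed by the reduction, each j-block (the maximal subpath through Y_j, and Z_j when present, together with the A_{ij}'s for neighbors m_i of n_j) is immediately preceded on the cycle by some vertex X_s and immediately followed by some vertex X_t. -/
/-! The vertices `X_s`, `Y_j`, `Z_j` form an independent set of `G`, and since every `n_j` has
degree 2 or 3 there are exactly as many of them as there are vertices `A_{ij}`: column `j`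
carries `d(n_j)` vertices `A_{ij}` against `d(n_j) - 1` vertices `Y_j`, `Z_j`, and the `r`
vertices `X_s` make up the difference. A Hamiltonian cycle is a 2-regular spanning subgraph, so
counting degrees on both sides shows that it has no edge between two `A`-vertices. Hence the
outer cycle-neighbour of an end of a `j`-block is some `X_s`, `Y_j` or `Z_j`, and it is not
`Y_j` or `Z_j`, whose two cycle-neighbours already lie inside the block. -/

open Finset

namespace SimpleGraph

variable {V : Type*}

theorem isIndepSet_of_isIndepSet_compl [Finite V] {H : SimpleGraph V} {k : ℕ}
    (hH : ∀ v, (H.neighborSet v).ncard = k) {A : Set V} (hAc : H.IsIndepSet Aᶜ)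
    (hcard : A.ncard = Aᶜ.ncard) : H.IsIndepSet A := by
  classical
  have := Fintype.ofFinite V
  set S := A.toFinset
  have hS : #Sᶜ = #S := by
    rw [← Set.toFinset_compl, ← Set.ncard_eq_toFinset_card', ← Set.ncard_eq_toFinset_card',
      hcard]
  have hdeg : ∀ a, #{b ∈ Sᶜ | H.Adj a b} + #{b ∈ S | H.Adj a b} = k := by
    intro a
    rw [← hH a, Set.ncard_eq_toFinset_card', ← card_union_of_disjoint]
    · congr 1; ext b; by_cases b ∈ S <;> simp_all
    · exact disjoint_filter_filter disjoint_compl_left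
  have hdeg_compl : ∀ b ∈ Sᶜ, #{a ∈ S | H.Adj a b} = k := by
    intro b hb
    rw [← hH b, Set.ncard_eq_toFinset_card']
    congr 1; ext a
    simp only [mem_filter, Set.mem_toFinset, mem_neighborSet, H.adj_comm b a]
    refine ⟨And.right, fun hab => ⟨by_contra fun ha => ?_, hab⟩⟩
    exact hAc (by simpa [S] using ha) (by simpa [S] using hb) hab.ne hab
  have hdouble : ∑ a ∈ S, #{b ∈ Sᶜ | H.Adj a b} = ∑ b ∈ Sᶜ, #{a ∈ S | H.Adj a b} :=
    sum_card_bipartiteAbove_eq_sum_card_bipartiteBelow H.Adj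
  have hinside : ∑ a ∈ S, #{b ∈ S | H.Adj a b} = 0 := by
    have h := sum_congr rfl fun a (_ : a ∈ S) => hdeg a
    rwa [sum_add_distrib, hdouble, sum_congr rfl hdeg_compl, sum_const, sum_const, hS,
      Nat.add_eq_left] at h
  intro u hu v hv _ huv
  have hempty := card_eq_zero.mp (sum_eq_zero_iff.mp hinside u (Set.mem_toFinset.mpr hu))
  exact eq_empty_iff_forall_notMem.mp hempty v (mem_filter.mpr ⟨Set.mem_toFinset.mpr hv, huv⟩)

namespace Walk

variable {G : SimpleGraph V} {a : V} {p : G.Walk a a}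

theorem IsHamiltonianCycle.ncard_neighborSet_spanningCoe_toSubgraph [DecidableEq V]
    (hp : p.IsHamiltonianCycle) (v : V) : (p.toSubgraph.spanningCoe.neighborSet v).ncard = 2 :=
  hp.isCycle.ncard_neighborSet_toSubgraph_eq_two (hp.mem_support v)

theorem IsCycle.eq_or_eq_or_eq_of_mem_edges (hp : p.IsCycle) {u x y z : V}
    (hx : s(u, x) ∈ p.edges) (hy : s(u, y) ∈ p.edges) (hz : s(u, z) ∈ p.edges) :
    x = y ∨ x = z ∨ y = z := by
  by_contra! h
  have hsub : {x, y, z} ⊆ p.toSubgraph.neighborSet u := by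
    rintro w (rfl | rfl | rfl) <;> exact adj_toSubgraph_iff_mem_edges.mpr ‹_›
  have hle := Set.ncard_le_ncard hsub p.finite_neighborSet_toSubgraph
  rw [Set.ncard_eq_three.mpr ⟨x, y, z, h.1, h.2.1, h.2.2, rfl⟩,
    hp.ncard_neighborSet_toSubgraph_eq_two (p.fst_mem_support_of_mem_edges hx)] at hle
  omega

end Walk

end SimpleGraph

open SimpleGraph

section Reduction

variable {r : ℕ} {E : Fin r → Fin r → Prop}

namespace Vtx

def IsA (v : Vtx r E) : Prop := ∃ i j h, v = Av i j h

theorem cases_of_not_isA {v : Vtx r E} (hv : ¬ v.IsA) :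
    (∃ s, v = Xv s) ∨ (∃ j, v = Yv j) ∨ ∃ j hj, v = Zv j hj := by
  obtain ⟨s | j | j | ⟨i, j⟩, hv'⟩ := v
  exacts [.inl ⟨s, rfl⟩, .inr (.inl ⟨j, rfl⟩), .inr (.inr ⟨j, hv', rfl⟩),
    absurd ⟨i, j, hv', rfl⟩ hv]

theorem Av_injective_left {i i' j : Fin r} {h : E i j} {h' : E i' j}
    (he : (Av i j h : Vtx r E) = Av i' j h') : i = i' := by
  simpa [Av] using congrArg Subtype.val he

theorem ncard_setOf_isA : {v : Vtx r E | v.IsA}.ncard = ∑ j, {i | E i j}.ncard := by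
  let f : (Σ j, {i // E i j}) → Vtx r E := fun e => Av e.2.1 e.1 e.2.2
  have hinj : f.Injective := by
    rintro ⟨j, i, h⟩ ⟨j', i', h'⟩ he
    obtain ⟨rfl, rfl⟩ : i = i' ∧ j = j' := by simpa [f, Av] using congrArg Subtype.val he
    rfl
  have hrange : Set.range f = {v | v.IsA} := by
    ext v; constructor
    · rintro ⟨e, rfl⟩; exact ⟨_, _, _, rfl⟩
    · rintro ⟨i, j, h, rfl⟩; exact ⟨⟨j, i, h⟩, rfl⟩
  rw [← hrange, Set.ncard_range_of_injective hinj, Nat.card_sigma]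
  rfl

theorem ncard_compl_setOf_isA :
    {v : Vtx r E | v.IsA}ᶜ.ncard = r + (r + {j | {i | E i j}.ncard = 3}.ncard) := by
  let f : Fin r ⊕ Fin r ⊕ {j // {i | E i j}.ncard = 3} → Vtx r E :=
    fun | .inl s => Xv s | .inr (.inl j) => Yv j | .inr (.inr j) => Zv j.1 j.2
  have hinj : f.Injective := by
    rintro (s | j | ⟨j, hj⟩) (s' | j' | ⟨j', hj'⟩) he <;>
      simpa [f, Xv, Yv, Zv] using congrArg Subtype.val he
  have hrange : Set.range f = {v | v.IsA}ᶜ := by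
    ext v; constructor
    · rintro ⟨s | j | ⟨j, hj⟩, rfl⟩ ⟨i, j', h, he⟩ <;>
        simpa [f, Xv, Yv, Zv, Av] using congrArg Subtype.val he
    · intro hv
      rcases cases_of_not_isA hv with ⟨s, rfl⟩ | ⟨j, rfl⟩ | ⟨j, hj, rfl⟩
      exacts [⟨.inl s, rfl⟩, ⟨.inr (.inl j), rfl⟩, ⟨.inr (.inr ⟨j, hj⟩), rfl⟩]
  rw [← hrange, Set.ncard_range_of_injective hinj, Nat.card_sum, Nat.card_sum, Nat.card_fin]
  rfl

theorem ncard_setOf_isA_eq_ncard_compl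
    (hdeg : ∀ j : Fin r, {i : Fin r | E i j}.ncard = 2 ∨ {i : Fin r | E i j}.ncard = 3) :
    {v : Vtx r E | v.IsA}.ncard = {v : Vtx r E | v.IsA}ᶜ.ncard := by
  classical
  have hcol : ∀ j, {i | E i j}.ncard = 2 + if {i | E i j}.ncard = 3 then 1 else 0 :=
    fun j => by rcases hdeg j with h | h <;> simp [h]
  rw [ncard_setOf_isA, ncard_compl_setOf_isA, sum_congr rfl fun j _ => hcol j, sum_add_distrib,
    sum_const, card_univ, Fintype.card_fin, smul_eq_mul, ← card_filter,
    Set.ncard_eq_toFinset_card', Set.toFinset_ofPred]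
  ring

end Vtx

theorem Gr_isIndepSet_compl_setOf_isA : (Gr r E).IsIndepSet {v | v.IsA}ᶜ := by
  intro u hu v hv hne hadj
  rw [Gr, fromRel_adj] at hadj
  rcases Vtx.cases_of_not_isA hu with ⟨s, rfl⟩ | ⟨j, rfl⟩ | ⟨j, hj, rfl⟩ <;>
  rcases Vtx.cases_of_not_isA hv with ⟨s', rfl⟩ | ⟨j', rfl⟩ | ⟨j', hj', rfl⟩ <;>
  simp [inK, inK', inK'', Xv, Yv, Zv] at hadj <;> grind

theorem Gr_adj_Av_of_not_isA {i j : Fin r} {hij : E i j} {v : Vtx r E}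
    (h : (Gr r E).Adj (Av i j hij) v) (hv : ¬ v.IsA) :
    (∃ s, v = Xv s) ∨ v = Yv j ∨ ∃ hj, v = Zv j hj := by
  rw [Gr, fromRel_adj] at h
  rcases Vtx.cases_of_not_isA hv with ⟨s, rfl⟩ | ⟨j', rfl⟩ | ⟨j', hj', rfl⟩
  · exact .inl ⟨s, rfl⟩
  · simp only [Av, Yv, inK, and_false, exists_false, inK', exists_eq_left', inK'', or_false,
      false_or, false_and] at h
    obtain ⟨-, rfl | rfl⟩ := h <;> exact .inr (.inl rfl)
  · simp only [Av, Zv, inK, and_false, exists_false, inK', inK'', exists_eq_right_right',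
      false_or, false_and] at h
    obtain ⟨-, ⟨-, rfl⟩ | ⟨-, rfl⟩⟩ := h <;> exact .inr (.inr ⟨hj', rfl⟩)

section HamiltonianCycle

variable {b : Vtx r E} {p : (Gr r E).Walk b b}

theorem not_isA_of_mem_edges_of_isA
    (hdeg : ∀ j : Fin r, {i : Fin r | E i j}.ncard = 2 ∨ {i : Fin r | E i j}.ncard = 3)
    (hp : p.IsHamiltonianCycle) {u v : Vtx r E} (hu : u.IsA) (huv : s(u, v) ∈ p.edges) :
    ¬ v.IsA := by
  have := hp.finite
  have hind : p.toSubgraph.spanningCoe.IsIndepSet {v | v.IsA} :=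
    isIndepSet_of_isIndepSet_compl hp.ncard_neighborSet_spanningCoe_toSubgraph
      (fun x hx y hy hne hxy => Gr_isIndepSet_compl_setOf_isA hx hy hne
        (p.toSubgraph.spanningCoe_le hxy))
      (Vtx.ncard_setOf_isA_eq_ncard_compl hdeg)
  intro hv
  have huv' : p.toSubgraph.Adj u v := Walk.adj_toSubgraph_iff_mem_edges.mpr huv
  exact hind hu hv huv'.ne huv'

theorem eq_Xv_or_eq_Yv_or_eq_Zv_of_mem_edges
    (hdeg : ∀ j : Fin r, {i : Fin r | E i j}.ncard = 2 ∨ {i : Fin r | E i j}.ncard = 3)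
    (hp : p.IsHamiltonianCycle) {i j : Fin r} {hij : E i j} {v : Vtx r E}
    (hv : s(v, Av i j hij) ∈ p.edges) : (∃ s, v = Xv s) ∨ v = Yv j ∨ ∃ hj, v = Zv j hj := by
  rw [Sym2.eq_swap] at hv
  exact Gr_adj_Av_of_not_isA (p.adj_of_mem_edges hv)
    (not_isA_of_mem_edges_of_isA hdeg hp ⟨i, j, hij, rfl⟩ hv)

theorem not_three_Av_mem_edges (hp : p.IsCycle) {w : Vtx r E} {i h k j : Fin r}
    {hi : E i j} {hh : E h j} {hk : E k j} (hih : i ≠ h) (hik : i ≠ k) (hhk : h ≠ k)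
    (ei : s(w, Av i j hi) ∈ p.edges) (eh : s(w, Av h j hh) ∈ p.edges)
    (ek : s(w, Av k j hk) ∈ p.edges) : False := by
  rcases hp.eq_or_eq_or_eq_of_mem_edges ei eh ek with he | he | he
  exacts [hih (Vtx.Av_injective_left he), hik (Vtx.Av_injective_left he),
    hhk (Vtx.Av_injective_left he)]

end HamiltonianCycle

end Reduction

theorem stmt_13_general (r : ℕ) (E : Fin r → Fin r → Prop)
    (hdeg : ∀ j : Fin r, {i : Fin r | E i j}.ncard = 2 ∨ {i : Fin r | E i j}.ncard = 3)
    {b : Vtx r E} (p : (Gr r E).Walk b b) (hp : p.IsHamiltonianCycle) :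
    (∀ (j : Fin r) (hj : {i : Fin r | E i j}.ncard = 3)
        (i h k : Fin r) (hi : E i j) (hh : E h j) (hk : E k j),
      i ≠ h → h ≠ k → i ≠ k →
      s(Av i j hi, Yv j) ∈ p.edges → s(Yv j, Av h j hh) ∈ p.edges →
      s(Av h j hh, Zv j hj) ∈ p.edges → s(Zv j hj, Av k j hk) ∈ p.edges →
      (∀ v : Vtx r E, s(v, Av i j hi) ∈ p.edges → v = Yv j ∨ ∃ s : Fin r, v = Xv s) ∧
      (∀ v : Vtx r E, s(v, Av k j hk) ∈ p.edges →
        v = Zv j hj ∨ ∃ t : Fin r, v = Xv t)) ∧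
    (∀ (j : Fin r), {i : Fin r | E i j}.ncard = 2 →
      ∀ (i k : Fin r) (hi : E i j) (hk : E k j), i ≠ k →
      s(Av i j hi, Yv j) ∈ p.edges → s(Yv j, Av k j hk) ∈ p.edges →
      (∀ v : Vtx r E, s(v, Av i j hi) ∈ p.edges → v = Yv j ∨ ∃ s : Fin r, v = Xv s) ∧
      (∀ v : Vtx r E, s(v, Av k j hk) ∈ p.edges →
        v = Yv j ∨ ∃ t : Fin r, v = Xv t)) := by
  refine ⟨fun j hj i h k hi hh hk hih hhk hik eiY eYh ehZ eZk => ⟨fun v hv => ?_, fun v hv => ?_⟩,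
    fun j hj i k hi hk hik _ _ => ⟨fun v hv => ?_, fun v hv => ?_⟩⟩
  all_goals rcases eq_Xv_or_eq_Yv_or_eq_Zv_of_mem_edges hdeg hp hv with hX | rfl | ⟨hj', rfl⟩
  all_goals try exact .inr hX
  all_goals try exact .inl rfl
  · rw [Sym2.eq_swap] at ehZ
    exact (not_three_Av_mem_edges hp.isCycle hih hik hhk hv ehZ eZk).elim
  · rw [Sym2.eq_swap] at eiY
    exact (not_three_Av_mem_edges hp.isCycle hih hik hhk eiY eYh hv).elim
  all_goals omega

/-- In any Hamiltonian cycle of the graph `G` of the reduction, each `j`-block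
(the forced subpath `A_{ij}, Y_j, A_{hj}, Z_j, A_{kj}` when `d(n_j) = 3`, or
`A_{ij}, Y_j, A_{kj}` when `d(n_j) = 2`) is immediately preceded on the cycle by
some vertex `X_s` and immediately followed by some vertex `X_t`: the
cycle-neighbor of each endpoint of the block other than its neighbor inside the
block is an `X`-vertex. -/
theorem stmt_13 (r : ℕ) (hr : 2 ≤ r) (E : Fin r → Fin r → Prop)
    (hdeg : ∀ j : Fin r, {i : Fin r | E i j}.ncard = 2 ∨ {i : Fin r | E i j}.ncard = 3)
    {b : Vtx r E} (p : (Gr r E).Walk b b) (hp : p.IsHamiltonianCycle) :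
    (∀ (j : Fin r) (hj : {i : Fin r | E i j}.ncard = 3)
        (i h k : Fin r) (hi : E i j) (hh : E h j) (hk : E k j),
      i ≠ h → h ≠ k → i ≠ k →
      s(Av i j hi, Yv j) ∈ p.edges → s(Yv j, Av h j hh) ∈ p.edges →
      s(Av h j hh, Zv j hj) ∈ p.edges → s(Zv j hj, Av k j hk) ∈ p.edges →
      (∀ v : Vtx r E, s(v, Av i j hi) ∈ p.edges → v = Yv j ∨ ∃ s : Fin r, v = Xv s) ∧
      (∀ v : Vtx r E, s(v, Av k j hk) ∈ p.edges →
        v = Zv j hj ∨ ∃ t : Fin r, v = Xv t)) ∧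
    (∀ (j : Fin r), {i : Fin r | E i j}.ncard = 2 →
      ∀ (i k : Fin r) (hi : E i j) (hk : E k j), i ≠ k →
      s(Av i j hi, Yv j) ∈ p.edges → s(Yv j, Av k j hk) ∈ p.edges →
      (∀ v : Vtx r E, s(v, Av i j hi) ∈ p.edges → v = Yv j ∨ ∃ s : Fin r, v = Xv s) ∧
      (∀ v : Vtx r E, s(v, Av k j hk) ∈ p.edges →
        v = Yv j ∨ ∃ t : Fin r, v = Xv t)) :=
  stmt_13_general r E hdeg p hp
end

section
/- The sets K_i = {X_i} ∪ {A_{sj} : m_s n_j ∈ E, s ≤ i} (1 ≤ i ≤ r), K'_j = {Y_j} ∪ {A_{ij} : m_i n_j ∈ E} (1 ≤ j ≤ r), and K''_j = {Z_j} ∪ {A_{ij} : m_i n_j ∈ E} (for d(n_j) = 3) are exactly the maximal cliques of the graph G whose adjacency is defined by co-membership in one of these sets. -/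
section Aux
variable {r : ℕ} {E : Fin r → Fin r → Prop}

lemma rel_of_adj {u v : Vtx r E} (h : (Gr r E).Adj u v) :
    (∃ s, inK s u ∧ inK s v) ∨ (∃ j, inK' j u ∧ inK' j v) ∨
      (∃ j, {i : Fin r | E i j}.ncard = 3 ∧ inK'' j u ∧ inK'' j v) := by
  rw [Gr, SimpleGraph.fromRel_adj] at h
  rcases h.2 with h | (⟨s, h1, h2⟩ | ⟨j, h1, h2⟩ | ⟨j, hj, h1, h2⟩)
  · exact h
  · exact Or.inl ⟨s, h2, h1⟩
  · exact Or.inr (Or.inl ⟨j, h2, h1⟩)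
  · exact Or.inr (Or.inr ⟨j, hj, h2, h1⟩)

lemma cliqueK (s : Fin r) : (Gr r E).IsClique {v : Vtx r E | inK s v} := by
  intro u hu v hv hne
  rw [Gr, SimpleGraph.fromRel_adj]
  exact ⟨hne, Or.inl (Or.inl ⟨s, hu, hv⟩)⟩

lemma cliqueK' (j : Fin r) : (Gr r E).IsClique {v : Vtx r E | inK' j v} := by
  intro u hu v hv hne
  rw [Gr, SimpleGraph.fromRel_adj]
  exact ⟨hne, Or.inl (Or.inr (Or.inl ⟨j, hu, hv⟩))⟩

lemma cliqueK'' (j : Fin r) (hj : {i : Fin r | E i j}.ncard = 3) :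
    (Gr r E).IsClique {v : Vtx r E | inK'' j v} := by
  intro u hu v hv hne
  rw [Gr, SimpleGraph.fromRel_adj]
  exact ⟨hne, Or.inl (Or.inr (Or.inr ⟨j, hj, hu, hv⟩))⟩

lemma absorbX {C : Set (Vtx r E)} (hC : (Gr r E).IsClique C) {s : Fin r}
    (hs : Xv s ∈ C) {v : Vtx r E} (hv : v ∈ C) : inK s v := by
  by_cases hne : v = Xv s
  · subst hne; exact rfl
  · rcases rel_of_adj (hC hv hs hne) with ⟨t, h1, h2⟩ | ⟨j, _, h2⟩ | ⟨j, _, _, h2⟩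
    · have hst : (s : Fin r) = t := h2
      cases hst; exact h1
    · exact (h2 : False).elim
    · exact (h2 : False).elim

lemma absorbY {C : Set (Vtx r E)} (hC : (Gr r E).IsClique C) {j : Fin r}
    (hs : Yv j ∈ C) {v : Vtx r E} (hv : v ∈ C) : inK' j v := by
  by_cases hne : v = Yv j
  · subst hne; exact rfl
  · rcases rel_of_adj (hC hv hs hne) with ⟨t, _, h2⟩ | ⟨j', h1, h2⟩ | ⟨j', _, _, h2⟩
    · exact (h2 : False).elim
    · have hjj : (j : Fin r) = j' := h2
      cases hjj; exact h1
    · exact (h2 : False).elim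

lemma absorbZ {C : Set (Vtx r E)} (hC : (Gr r E).IsClique C) {j : Fin r}
    {hj : {i : Fin r | E i j}.ncard = 3}
    (hs : Zv j hj ∈ C) {v : Vtx r E} (hv : v ∈ C) : inK'' j v := by
  by_cases hne : v = Zv j hj
  · subst hne; exact rfl
  · rcases rel_of_adj (hC hv hs hne) with ⟨t, _, h2⟩ | ⟨j', _, h2⟩ | ⟨j', _, h1, h2⟩
    · exact (h2 : False).elim
    · exact (h2 : False).elim
    · have hjj : (j : Fin r) = j' := h2
      cases hjj; exact h1

end Aux

/-- The sets `K_s`, `K'_j`, and `K''_j` (the latter for `j` with `d(n_j) = 3`)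
are exactly the maximal cliques of the graph `G` of the reduction. -/
theorem stmt_17 (r : ℕ) (hr : 2 ≤ r) (E : Fin r → Fin r → Prop)
    (hdegN : ∀ j : Fin r, {i : Fin r | E i j}.ncard = 2 ∨ {i : Fin r | E i j}.ncard = 3)
    (hdegM : ∀ i : Fin r, 2 ≤ {j : Fin r | E i j}.ncard) :
    ∀ C : Set (Vtx r E),
      ((Gr r E).IsClique C ∧ ∀ D : Set (Vtx r E), (Gr r E).IsClique D → C ⊆ D → C = D) ↔
      ((∃ s : Fin r, C = {v : Vtx r E | inK s v}) ∨
       (∃ j : Fin r, C = {v : Vtx r E | inK' j v}) ∨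
       (∃ j : Fin r, {i : Fin r | E i j}.ncard = 3 ∧ C = {v : Vtx r E | inK'' j v})) := by
  
  intro C
  constructor
  · rintro ⟨hC, hmax⟩
    by_cases hx : ∃ s, Xv (E := E) s ∈ C
    · obtain ⟨s, hs⟩ := hx
      exact Or.inl ⟨s, hmax _ (cliqueK s) (fun v hv => absorbX hC hs hv)⟩
    · by_cases hy : ∃ j, Yv (E := E) j ∈ C
      · obtain ⟨j, hj⟩ := hy
        exact Or.inr (Or.inl ⟨j, hmax _ (cliqueK' j) (fun v hv => absorbY hC hj hv)⟩)
      · by_cases hz : ∃ j hj, Zv (E := E) j hj ∈ C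
        · obtain ⟨j, hj, hzj⟩ := hz
          exact Or.inr (Or.inr ⟨j, hj,
            hmax _ (cliqueK'' j hj) (fun v hv => absorbZ hC hzj hv)⟩)
        · exfalso
          have hrpos : 0 < r := by omega
          set t : Fin r := ⟨r - 1, by omega⟩ with ht
          have hCt : insert (Xv t) C ⊆ {v : Vtx r E | inK t v} := by
            rintro v (rfl | hv)
            · exact rfl
            · obtain ⟨val, hval⟩ := v
              rcases val with s | j | j | ⟨i, j⟩
              · exact absurd ⟨s, hv⟩ hx
              · exact absurd ⟨j, hv⟩ hy
              · exact absurd ⟨j, hval, hv⟩ hz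
              · show i ≤ t
                have := i.isLt
                rw [Fin.le_def]
                simp only [ht]
                omega
          have hD : (Gr r E).IsClique (insert (Xv t) C) :=
            (cliqueK t).subset hCt
          have hCD := hmax _ hD (Set.subset_insert _ _)
          exact hx ⟨t, hCD ▸ Set.mem_insert _ _⟩
  · rintro (⟨s, rfl⟩ | ⟨j, rfl⟩ | ⟨j, hj, rfl⟩)
    · refine ⟨cliqueK s, fun D hD hsub => Set.Subset.antisymm hsub fun v hv => ?_⟩
      exact absorbX hD (hsub (show inK s (Xv (E := E) s) from rfl)) hv
    · refine ⟨cliqueK' j, fun D hD hsub => Set.Subset.antisymm hsub fun v hv => ?_⟩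
      exact absorbY hD (hsub (show inK' j (Yv (E := E) j) from rfl)) hv
    · refine ⟨cliqueK'' j hj, fun D hD hsub => Set.Subset.antisymm hsub fun v hv => ?_⟩
      exact absorbZ hD (hj := hj) (hsub (show inK'' j (Zv (E := E) j hj) from rfl)) hv
end

section
/- If G is a graph that is the intersection graph of a family of directed paths in a rooted directed tree, then G is chordal (every cycle of length at least 4 has a chord). -/
open SimpleGraph Walk

namespace SimpleGraph

variable {V W : Type*}

namespace Walk

variable {G : SimpleGraph V} {u : V}

theorem IsCycle.mk_snd_penultimate_notMem_edges {c : G.Walk u u} (hc : c.IsCycle)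
    (hlen : 4 ≤ c.length) : s(c.snd, c.penultimate) ∉ c.edges := by
  have hpen : c.penultimate ≠ u := fun h => by
    have := (hc.getVert_endpoint_iff (i := c.length - 1) (by omega)).1 h
    omega
  have hedges : c.edges = s(u, c.snd) :: c.tail.edges := by
    conv_lhs => rw [← c.cons_tail_eq hc.not_nil, edges_cons]
  rw [hedges, List.mem_cons]
  rintro (h | h)
  · rcases Sym2.eq_iff.1 h with ⟨-, h⟩ | ⟨-, h⟩
    · exact hc.snd_ne_penultimate h.symm
    · exact hpen h
  · have h2 : c.penultimate = c.getVert 2 :=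
      (hc.isPath_tail.eq_snd_of_mem_edges h).trans (getVert_tail _)
    have := hc.getVert_injOn ⟨by omega, by omega⟩ ⟨by omega, by omega⟩ h2
    omega

theorem IsCycle.exists_chord_of_forall_adj {α : Type*} [LinearOrder α] (f : V → α)
    (hf : ∀ ⦃x y z⦄, G.Adj x y → G.Adj x z → y ≠ z → f y ≤ f x → f z ≤ f x → G.Adj y z)
    {c : G.Walk u u} (hc : c.IsCycle) (hlen : 4 ≤ c.length) :
    ∃ x y, x ∈ c.support ∧ y ∈ c.support ∧ G.Adj x y ∧ s(x, y) ∉ c.edges := by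
  classical
  obtain ⟨x, hx, hmax⟩ := c.support.toFinset.exists_max_image f ⟨u, by simp⟩
  rw [List.mem_toFinset] at hx
  set c' := c.rotate x hx
  have hc' : c'.IsCycle := hc.rotate hx
  have hsupp : ∀ {y}, y ∈ c'.support → y ∈ c.support := (mem_support_rotate_iff c x hx).1
  have hsnd : c'.snd ∈ c.support := hsupp (c'.getVert_mem_support 1)
  have hpen : c'.penultimate ∈ c.support := hsupp (c'.getVert_mem_support _)
  refine ⟨c'.snd, c'.penultimate, hsnd, hpen,
    hf (c'.adj_snd hc'.not_nil) (c'.adj_penultimate hc'.not_nil).symm hc'.snd_ne_penultimate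
      (hmax _ (List.mem_toFinset.2 hsnd)) (hmax _ (List.mem_toFinset.2 hpen)), fun h => ?_⟩
  exact hc'.mk_snd_penultimate_notMem_edges (by simpa [c'] using hlen)
    ((rotate_edges c x hx).mem_iff.2 h)

end Walk

variable {G T : SimpleGraph W} {r t q x : W} {S : Set W}

theorem Walk.dist_lt_of_mem_support {g : G.Walk r t} (hg : g.length = G.dist r t)
    (hx : x ∈ g.support) (hxt : x ≠ t) : G.dist r x < G.dist r t := by
  classical
  exact hg ▸ (dist_le _).trans_lt (length_takeUntil_lt_length hx hxt)

theorem Walk.isPath_append_of_dist_le {g : G.Walk r t} (hg : g.length = G.dist r t)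
    {p : G.Walk t q} (hp : p.IsPath) (hmin : ∀ y ∈ p.support, G.dist r t ≤ G.dist r y) :
    (g.append p).IsPath := by
  rw [isPath_def, support_append, List.nodup_append]
  refine ⟨(g.isPath_of_length_eq_dist hg).support_nodup, hp.support_nodup.sublist
    (List.tail_sublist _), ?_⟩
  -- vertices of `g` other than `t` are strictly closer to `r` than `t`, those of `p` are not
  rintro y hyg _ hyp rfl
  have hyt : y ≠ t := by
    rintro rfl
    have hnd := hp.support_nodup
    rw [← p.cons_tail_support, List.nodup_cons] at hnd
    exact hnd.1 hyp
  have := g.dist_lt_of_mem_support hg hyg hyt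
  have := hmin y (List.mem_of_mem_tail hyp)
  omega

theorem Preconnected.exists_isPath_of_induce (hS : (G.induce S).Preconnected) {a b : W}
    (ha : a ∈ S) (hb : b ∈ S) : ∃ p : G.Walk a b, p.IsPath ∧ ∀ y ∈ p.support, y ∈ S := by
  obtain ⟨p, hp⟩ := (hS ⟨a, ha⟩ ⟨b, hb⟩).exists_isPath
  let ι := Embedding.induce (G := G) S
  have hsupp : ∀ y ∈ (p.map ι.toHom).support, y ∈ S := by
    intro y hy
    rw [Walk.support_map, List.mem_map] at hy
    obtain ⟨⟨y, hyS⟩, -, rfl⟩ := hy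
    exact hyS
  exact ⟨_, hp.map ι.injective, hsupp⟩

noncomputable def infDist (G : SimpleGraph W) (r : W) (S : Set W) : ℕ :=
  sInf (G.dist r '' S)

theorem exists_dist_eq_infDist (hS : S.Nonempty) : ∃ t ∈ S, G.dist r t = G.infDist r S :=
  Nat.sInf_mem (hS.image _)

theorem infDist_le_dist (hx : x ∈ S) : G.infDist r S ≤ G.dist r x :=
  Nat.sInf_le ⟨x, hx, rfl⟩

theorem IsTree.mem_of_dist_eq_infDist (hT : T.IsTree) {X U : Set W}
    (hX : (T.induce X).Preconnected) (hU : (T.induce U).Preconnected) (hXU : (X ∩ U).Nonempty)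
    (ht : t ∈ X) (htX : T.dist r t = T.infDist r X) (hle : T.infDist r U ≤ T.infDist r X) :
    t ∈ U := by
  obtain ⟨q, hqX, hqU⟩ := hXU
  obtain ⟨t', ht'U, ht'⟩ := exists_dist_eq_infDist (G := T) (r := r) ⟨q, hqU⟩
  obtain ⟨p, hp, hpX⟩ := hX.exists_isPath_of_induce ht hqX
  obtain ⟨p', hp', hp'U⟩ := hU.exists_isPath_of_induce ht'U hqU
  obtain ⟨g, hg⟩ := hT.connected.exists_walk_length_eq_dist r t
  obtain ⟨g', hg'⟩ := hT.connected.exists_walk_length_eq_dist r t'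
  have hP := g.isPath_append_of_dist_le hg hp fun y hy => htX ▸ infDist_le_dist (hpX y hy)
  have hP' := g'.isPath_append_of_dist_le hg' hp' fun y hy => ht' ▸ infDist_le_dist (hp'U y hy)
  -- both decompositions describe the unique path from `r` to `q`
  have ht_mem : t ∈ (g'.append p').support := (hT.existsUnique_path r q).unique hP hP' ▸
    support_subset_support_append_right g p p.start_mem_support
  rcases (mem_support_append_iff _ _).1 ht_mem with htg' | htp'
  · by_cases htt' : t = t'
    · exact htt' ▸ ht'U
    · have := g'.dist_lt_of_mem_support hg' htg' htt'
      omega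
  · exact hp'U t htp'

theorem IsTree.inter_nonempty_of_infDist_le (hT : T.IsTree) {X Y Z : Set W}
    (hX : (T.induce X).Preconnected) (hY : (T.induce Y).Preconnected)
    (hZ : (T.induce Z).Preconnected) (hXY : (X ∩ Y).Nonempty) (hXZ : (X ∩ Z).Nonempty)
    (hYX : T.infDist r Y ≤ T.infDist r X) (hZX : T.infDist r Z ≤ T.infDist r X) :
    (Y ∩ Z).Nonempty := by
  obtain ⟨t, htX, ht⟩ :=
    exists_dist_eq_infDist (G := T) (r := r) (hXY.mono Set.inter_subset_left)
  exact ⟨t, hT.mem_of_dist_eq_infDist hX hY hXY htX ht hYX,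
    hT.mem_of_dist_eq_infDist hX hZ hXZ htX ht hZX⟩

end SimpleGraph

theorem List.IsChain.fromRel_of_nodup {W : Type*} {A : W → W → Prop} :
    ∀ {l : List W}, l.Nodup → l.IsChain A → l.IsChain (SimpleGraph.fromRel A).Adj
  | [], _, _ => .nil
  | [_], _, _ => .singleton _
  | x :: y :: l, hnd, hch => by
    rw [List.isChain_cons_cons] at hch ⊢
    have hxy : x ≠ y := fun h => (List.nodup_cons.1 hnd).1 (h ▸ List.mem_cons_self)
    exact ⟨(fromRel_adj A x y).2 ⟨hxy, Or.inl hch.1⟩, fromRel_of_nodup hnd.of_cons hch.2⟩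

theorem IsDirPathOn.preconnected_induce {W : Type*} {A : W → W → Prop} {s : Set W}
    (h : IsDirPathOn A s) : ((fromRel A).induce s).Preconnected := by
  obtain ⟨l, hnd, hmem, hch, -⟩ := h
  rcases eq_or_ne l [] with rfl | hne
  · rintro ⟨x, hx⟩
    exact absurd ((hmem x).2 hx) List.not_mem_nil
  · have hs : s = {x | x ∈ (Walk.ofSupport l hne (hch.fromRel_of_nodup hnd)).support} := by
      ext x
      rw [Set.mem_ofPred_eq, support_ofSupport, hmem]
    exact hs ▸ (Walk.ofSupport l hne _).connected_induce_support.preconnected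

/-- If `G` is the intersection graph of a family of directed paths in a rooted
directed tree (an orientation of a finite tree with exactly one vertex of
in-degree zero), then `G` is chordal: every cycle of length at least 4 has a
chord, i.e. an edge of `G` joining two vertices of the cycle that is not an edge
of the cycle. -/
theorem stmt_18 {V : Type*} (G : SimpleGraph V)
    (hRDV : ∃ (W : Type) (_ : Finite W) (A : W → W → Prop) (path : V → Set W),
      (SimpleGraph.fromRel A).IsTree ∧
      (∃! w : W, {u : W | A u w} = ∅) ∧
      (∀ v : V, IsDirPathOn A (path v)) ∧
      (∀ u v : V, u ≠ v → (G.Adj u v ↔ (path u ∩ path v).Nonempty))) :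
    ∀ (v : V) (c : G.Walk v v), c.IsCycle → 4 ≤ c.length →
      ∃ x y : V, x ∈ c.support ∧ y ∈ c.support ∧ G.Adj x y ∧ s(x, y) ∉ c.edges := by
  obtain ⟨W, -, A, path, hT, -, hpath, hG⟩ := hRDV
  obtain ⟨r⟩ := hT.connected.nonempty
  intro v c hc hlen
  refine hc.exists_chord_of_forall_adj (fun a => (fromRel A).infDist r (path a)) ?_ hlen
  intro x y z hxy hxz hyz hyx hzx
  rw [hG x y hxy.ne] at hxy
  rw [hG x z hxz.ne] at hxz
  rw [hG y z hyz]
  exact hT.inter_nonempty_of_infDist_le (hpath x).preconnected_induce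
    (hpath y).preconnected_induce (hpath z).preconnected_induce hxy hxz hyx hzx
end
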